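/- arXiv:2402.15950 — 4 statements merged into one kernel-verified Lean document; each statement's English description precedes it below -/
import Mathlib

section
/- Let H be a Hilbert space and {e_n}_{n≥0} a sequence of unit vectors in H whose linear span is dense. Define the auxiliary sequence g₀ = e₀ and g_n = e_n − Σ_{k=0}^{n−1} ⟨e_n, e_k⟩ g_k. Then {e_n} is effective (i.e., for every f ∈ H, f = Σ_n ⟨f, g_n⟩ e_n in norm) if and only if {g_n} is a Parseval frame for H (i.e., Σ_n |⟨f, g_n⟩|² = ‖f‖² for all f ∈ H). -/
/-!
The Kaczmarz recursion for `g` is exactly what makes `⟪e N, f - S N⟫ = ⟪g N, f⟫`, where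
`S N = ∑ k < N, ⟪g k, f⟫ • e k`. Passing from `S N` to `S (N + 1)` therefore removes from the
remainder its component along the unit vector `e N`, and Pythagoras gives
`‖f - S N‖² = ‖f‖² - ∑ k < N, ‖⟪g k, f⟫‖²`. So `S N → f` exactly when the coefficient series
sums to `‖f‖²`.
-/

open Filter Topology Finset

theorem tendsto_norm_sq_nhds_zero_iff {α E : Type*} [SeminormedAddCommGroup E] {l : Filter α}
    {v : α → E} : Tendsto (fun n => ‖v n‖ ^ 2) l (𝓝 0) ↔ Tendsto v l (𝓝 0) := by
  rw [tendsto_zero_iff_norm_tendsto_zero (f := v)]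
  refine ⟨fun h => ?_, fun h => by simpa using h.pow 2⟩
  simpa [Function.comp_def] using (Real.continuous_sqrt.tendsto 0).comp h

theorem tendsto_iff_tsum_eq_of_norm_sub_sq_eq {E : Type*} [SeminormedAddCommGroup E]
    {x : ℕ → E} {y : E} {a : ℕ → ℝ} {c : ℝ} (ha : ∀ n, 0 ≤ a n)
    (h : ∀ N, ‖y - x N‖ ^ 2 = c - ∑ k ∈ range N, a k) :
    Tendsto x atTop (𝓝 y) ↔ ∑' n, a n = c := by
  have hsum : Summable a := summable_of_sum_range_le ha fun N => by
    nlinarith [h N, sq_nonneg ‖y - x N‖]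
  have hsq : (fun N => ‖x N - y‖ ^ 2) = fun N => -(∑ k ∈ range N, a k - c) := by
    ext N
    rw [norm_sub_rev, h]
    ring
  rw [← hsum.hasSum_iff, hasSum_iff_tendsto_nat_of_nonneg ha, ← tendsto_sub_nhds_zero_iff,
    ← tendsto_norm_sq_nhds_zero_iff, hsq, ← neg_zero, tendsto_neg_iff, tendsto_sub_nhds_zero_iff]

section Kaczmarz

variable {𝕜 E : Type*} [RCLike 𝕜] [NormedAddCommGroup E] [InnerProductSpace 𝕜 E]

theorem norm_sub_inner_smul_sq {u : E} (hu : ‖u‖ = 1) (x : E) :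
    ‖x - inner 𝕜 u x • u‖ ^ 2 = ‖x‖ ^ 2 - ‖inner 𝕜 u x‖ ^ 2 := by
  have hre : RCLike.re (inner 𝕜 x (inner 𝕜 u x • u)) = ‖inner 𝕜 u x‖ ^ 2 := by
    rw [inner_smul_right, ← inner_conj_symm, RCLike.conj_mul, ← RCLike.ofReal_pow,
      RCLike.ofReal_re, RCLike.norm_conj]
  rw [@norm_sub_sq 𝕜, hre, norm_smul, hu, mul_one]
  ring

variable {e g : ℕ → E}

theorem inner_sub_kaczmarz_sum
    (hg : ∀ n, g n = e n - ∑ k ∈ range n, inner 𝕜 (e k) (e n) • g k) (f : E) (N : ℕ) :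
    inner 𝕜 (e N) (f - ∑ k ∈ range N, inner 𝕜 (g k) f • e k) = inner 𝕜 (g N) f := by
  rw [hg N, inner_sub_left, inner_sub_right, sum_inner, inner_sum]
  congr 1
  refine sum_congr rfl fun k _ => ?_
  rw [inner_smul_left, inner_smul_right, inner_conj_symm, mul_comm]

theorem norm_sub_kaczmarz_sum_sq
    (hg : ∀ n, g n = e n - ∑ k ∈ range n, inner 𝕜 (e k) (e n) • g k)
    (hunit : ∀ n, ‖e n‖ = 1) (f : E) (N : ℕ) :
    ‖f - ∑ k ∈ range N, inner 𝕜 (g k) f • e k‖ ^ 2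
      = ‖f‖ ^ 2 - ∑ k ∈ range N, ‖inner 𝕜 (g k) f‖ ^ 2 := by
  induction N with
  | zero => simp
  | succ N ih =>
    have hstep : f - ∑ k ∈ range (N + 1), inner 𝕜 (g k) f • e k
        = (f - ∑ k ∈ range N, inner 𝕜 (g k) f • e k) - inner 𝕜 (g N) f • e N := by
      rw [sum_range_succ, sub_add_eq_sub_sub]
    rw [hstep, ← inner_sub_kaczmarz_sum hg f N, norm_sub_inner_smul_sq (hunit N),
      inner_sub_kaczmarz_sum hg f N, ih, sum_range_succ]
    ring

end Kaczmarz

theorem stmt3_general {H : Type*} [NormedAddCommGroup H] [InnerProductSpace ℂ H]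
    (e : ℕ → H) (hunit : ∀ n, ‖e n‖ = 1)
    (g : ℕ → H) (hg0 : g 0 = e 0)
    (hg : ∀ n, 0 < n →
      g n = e n - ∑ k ∈ Finset.range n, (inner ℂ (e k) (e n) : ℂ) • g k) :
    (∀ f : H, Tendsto (fun N => ∑ k ∈ Finset.range N, (inner ℂ (g k) f : ℂ) • e k)
        atTop (nhds f))
      ↔ (∀ f : H, ∑' n, ‖(inner ℂ (g n) f : ℂ)‖ ^ 2 = ‖f‖ ^ 2) := by
  have hrec : ∀ n, g n = e n - ∑ k ∈ Finset.range n, inner ℂ (e k) (e n) • g k := by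
    rintro (_ | n)
    · simpa using hg0
    · exact hg _ n.succ_pos
  exact forall_congr' fun f => tendsto_iff_tsum_eq_of_norm_sub_sq_eq (fun n => sq_nonneg _)
    (norm_sub_kaczmarz_sum_sq hrec hunit f)

/-- For a complete sequence of unit vectors `{e_n}` in a Hilbert space
with auxiliary (Kaczmarz) sequence `{g_n}`, effectiveness of `{e_n}` is equivalent to
`{g_n}` being a Parseval frame. (Inner products `⟨u,v⟩` below are linear in the first
argument, i.e. `inner v u` in Mathlib's convention.) -/
theorem stmt3 {H : Type*} [NormedAddCommGroup H] [InnerProductSpace ℂ H]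
    [CompleteSpace H]
    (e : ℕ → H) (hunit : ∀ n, ‖e n‖ = 1)
    (hdense : Dense ((Submodule.span ℂ (Set.range e) : Submodule ℂ H) : Set H))
    (g : ℕ → H) (hg0 : g 0 = e 0)
    (hg : ∀ n, 0 < n →
      g n = e n - ∑ k ∈ Finset.range n, (inner ℂ (e k) (e n) : ℂ) • g k) :
    (∀ f : H, Tendsto (fun N => ∑ k ∈ Finset.range N, (inner ℂ (g k) f : ℂ) • e k)
        atTop (nhds f))
      ↔ (∀ f : H, ∑' n, ‖(inner ℂ (g n) f : ℂ)‖ ^ 2 = ‖f‖ ^ 2) :=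
  stmt3_general e hunit g hg0 hg
end

section
/- Let μ be a Borel probability measure on [0,1)² with Rokhlin disintegration into marginal μ₁ and slice measures {γ^{x₁}}. Suppose {g_{n₁}} is a Parseval frame for L²(μ₁) and, for μ₁-almost every x₁, {g_{n₂}^{x₁}} is a Parseval frame for L²(γ^{x₁}) with (x₁, n₂) ↦ g_{n₂}^{x₁}(x₂) jointly measurable. Then the doubly indexed family {(x₁,x₂) ↦ g_{n₂}^{x₁}(x₂) g_{n₁}(x₁)} is a Parseval frame for L²(μ). -/
/-!
By Fubini, the coefficient of `f ∈ L²(μ)` against `G_{n₂}^{x₁} g_{n₁}` is the `n₁`-th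
coefficient of the slice coefficient `F_{n₂}(x₁) = ⟨f(x₁, ·), G_{n₂}^{x₁}⟩` in `L²(γ^{x₁})`.
Summing over `n₁` (Parseval in `L²(μ₁)`) and then over `n₂` (Parseval in every `L²(γ^{x₁})`,
under the integral) gives `‖f‖²`; the sums are taken in `ℝ≥0∞`, where Tonelli exchanges them
freely. Fubini applies because each element of a Parseval frame has norm at most `1`, so that
`G g ∈ L²(μ)`, and because the disintegration identity forces `γ` to agree `μ₁`-a.e. with the
measurable conditional kernel `μ.condKernel`.
-/

open MeasureTheory ProbabilityTheory Set ComplexConjugate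
open scoped ENNReal

def IsParsevalFrame {α ι : Type*} [MeasurableSpace α] (ν : Measure α) (e : ι → α → ℂ) : Prop :=
  ∀ f : α → ℂ, MemLp f 2 ν → ∑' i, ‖∫ x, f x * conj (e i x) ∂ν‖ ^ 2 = ∫ x, ‖f x‖ ^ 2 ∂ν

section L2

variable {α : Type*} [MeasurableSpace α] {ν : Measure α} {f : α → ℂ}

lemma memLp_two_iff_lintegral_ofReal_norm_sq_lt_top (hf : AEStronglyMeasurable f ν) :
    MemLp f 2 ν ↔ ∫⁻ x, ENNReal.ofReal (‖f x‖ ^ 2) ∂ν < ⊤ := by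
  rw [memLp_two_iff_integrable_sq_norm hf, Integrable,
    hasFiniteIntegral_iff_ofReal (ae_of_all _ fun _ => sq_nonneg _)]
  exact and_iff_right (hf.norm.pow 2)

lemma MeasureTheory.MemLp.ofReal_integral_norm_sq (hf : MemLp f 2 ν) :
    ENNReal.ofReal (∫ x, ‖f x‖ ^ 2 ∂ν) = ∫⁻ x, ENNReal.ofReal (‖f x‖ ^ 2) ∂ν :=
  ofReal_integral_eq_lintegral_ofReal ((memLp_two_iff_integrable_sq_norm hf.1).1 hf)
    (ae_of_all _ fun _ => sq_nonneg _)

lemma MeasureTheory.MemLp.ae_eq_zero_of_integral_norm_sq_eq_zero (hf : MemLp f 2 ν)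
    (h : ∫ x, ‖f x‖ ^ 2 ∂ν = 0) : f =ᵐ[ν] 0 := by
  have hsq := (integral_eq_zero_iff_of_nonneg (fun _ => sq_nonneg _)
    ((memLp_two_iff_integrable_sq_norm hf.1).1 hf)).1 h
  filter_upwards [hsq] with x hx
  simpa using hx

end L2

namespace IsParsevalFrame

variable {α ι : Type*} [MeasurableSpace α] {ν : Measure α} {e : ι → α → ℂ} {f : α → ℂ}

-- A non-summable family also has `tsum` equal to `0`, so the zero case needs `f = 0` a.e.
lemma hasSum (h : IsParsevalFrame ν e) (hf : MemLp f 2 ν) :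
    HasSum (fun i => ‖∫ x, f x * conj (e i x) ∂ν‖ ^ 2) (∫ x, ‖f x‖ ^ 2 ∂ν) := by
  by_cases hs : Summable fun i => ‖∫ x, f x * conj (e i x) ∂ν‖ ^ 2
  · exact h f hf ▸ hs.hasSum
  · have hzero : f =ᵐ[ν] 0 := hf.ae_eq_zero_of_integral_norm_sq_eq_zero <| by
      rw [← h f hf, tsum_eq_zero_of_not_summable hs]
    have hcoeff : ∀ i, ∫ x, f x * conj (e i x) ∂ν = 0 := fun i =>
      integral_eq_zero_of_ae (by filter_upwards [hzero] with x hx; simp [hx])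
    exact absurd (by simp [hcoeff]) hs

lemma tsum_ofReal_eq_lintegral (h : IsParsevalFrame ν e) (hf : MemLp f 2 ν) :
    ∑' i, ENNReal.ofReal (‖∫ x, f x * conj (e i x) ∂ν‖ ^ 2)
      = ∫⁻ x, ENNReal.ofReal (‖f x‖ ^ 2) ∂ν := by
  rw [← hf.ofReal_integral_norm_sq, ← (h.hasSum hf).tsum_eq,
    ENNReal.ofReal_tsum_of_nonneg (fun _ => sq_nonneg _) (h.hasSum hf).summable]

lemma of_tsum_ofReal_eq_lintegral
    (h : ∀ f : α → ℂ, StronglyMeasurable f → MemLp f 2 ν →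
      ∑' i, ENNReal.ofReal (‖∫ x, f x * conj (e i x) ∂ν‖ ^ 2)
        = ∫⁻ x, ENNReal.ofReal (‖f x‖ ^ 2) ∂ν) :
    IsParsevalFrame ν e := by
  intro f hf
  have hmk := hf.1.ae_eq_mk
  have hcoeff : ∀ i, ∫ x, f x * conj (e i x) ∂ν = ∫ x, hf.1.mk f x * conj (e i x) ∂ν :=
    fun i => integral_congr_ae (by filter_upwards [hmk] with x hx; rw [hx])
  have hnorm : ∫ x, ‖f x‖ ^ 2 ∂ν = ∫ x, ‖hf.1.mk f x‖ ^ 2 ∂ν :=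
    integral_congr_ae (by filter_upwards [hmk] with x hx; rw [hx])
  simp_rw [hcoeff, hnorm]
  rw [integral_eq_lintegral_of_nonneg_ae (ae_of_all _ fun _ => sq_nonneg _)
      (hf.1.stronglyMeasurable_mk.aestronglyMeasurable.norm.pow 2),
    ← h _ hf.1.stronglyMeasurable_mk (hf.ae_eq hmk),
    ENNReal.tsum_toReal_eq fun _ => ENNReal.ofReal_ne_top]
  simp_rw [ENNReal.toReal_ofReal (sq_nonneg _)]

lemma norm_sq_integral_mul_conj_le (h : IsParsevalFrame ν e) (hf : MemLp f 2 ν) (i : ι) :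
    ‖∫ x, f x * conj (e i x) ∂ν‖ ^ 2 ≤ ∫ x, ‖f x‖ ^ 2 ∂ν :=
  le_hasSum (h.hasSum hf) i fun _ _ => sq_nonneg _

-- Test the frame against the truncations of `e i` at height `N`:
-- the `i`-th coefficient of `f` is `t = ‖f‖²`, and Bessel gives `t ^ 2 ≤ t`.
lemma lintegral_ofReal_norm_sq_le_one [IsFiniteMeasure ν] (h : IsParsevalFrame ν e) {i : ι}
    (he : Measurable (e i)) : ∫⁻ x, ENNReal.ofReal (‖e i x‖ ^ 2) ∂ν ≤ 1 := by
  set S : ℕ → Set α := fun N => {x | ‖e i x‖ ≤ N}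
  have hS : ∀ N, MeasurableSet (S N) := fun N => measurableSet_le he.norm measurable_const
  have htrunc : ∀ N, ∫⁻ x in S N, ENNReal.ofReal (‖e i x‖ ^ 2) ∂ν ≤ 1 := by
    intro N
    set f := (S N).indicator (e i)
    have hf : MemLp f 2 ν := by
      refine MemLp.of_bound ((he.indicator (hS N)).aestronglyMeasurable) N (ae_of_all _ fun x => ?_)
      by_cases hx : x ∈ S N
      · simp only [f, indicator_of_mem hx]; exact hx
      · simp [f, hx]
    have hcoeff : ∫ x, f x * conj (e i x) ∂ν = ((∫ x, ‖f x‖ ^ 2 ∂ν : ℝ) : ℂ) := by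
      rw [← integral_complex_ofReal]
      refine integral_congr_ae (ae_of_all _ fun x => ?_)
      by_cases hx : x ∈ S N
      · simp [f, hx, Complex.mul_conj']
      · simp [f, hx]
    have hbessel := h.norm_sq_integral_mul_conj_le hf i
    have ht : 0 ≤ ∫ x, ‖f x‖ ^ 2 ∂ν := integral_nonneg fun _ => sq_nonneg _
    rw [hcoeff, Complex.norm_real, Real.norm_of_nonneg ht] at hbessel
    have hindicator : ∀ x, ENNReal.ofReal (‖f x‖ ^ 2)
        = (S N).indicator (fun x => ENNReal.ofReal (‖e i x‖ ^ 2)) x := by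
      intro x
      by_cases hx : x ∈ S N <;> simp [f, hx]
    rw [← lintegral_indicator (hS N), ← lintegral_congr hindicator, ← hf.ofReal_integral_norm_sq]
    exact ENNReal.ofReal_le_one.2 (by nlinarith)
  have hunion : ⋃ N, S N = univ :=
    eq_univ_of_forall fun x => mem_iUnion.2 (exists_nat_ge ‖e i x‖)
  have hmono : Monotone S := fun N M hNM x (hx : ‖e i x‖ ≤ N) =>
    hx.trans (Nat.cast_le.2 hNM)
  rw [← setLIntegral_univ, ← hunion, setLIntegral_iUnion_of_directed _ hmono.directed_le]
  exact iSup_le htrunc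

end IsParsevalFrame

section CompProd

variable {α β : Type*} [MeasurableSpace α] [MeasurableSpace β] {μ₁ : Measure α} {κ : Kernel α β}
  [SFinite μ₁] [IsSFiniteKernel κ]

lemma memLp_two_compProd_mul {g : α → ℂ} {G : α → β → ℂ} (hg : Measurable g)
    (hgL2 : MemLp g 2 μ₁) (hG : Measurable (Function.uncurry G)) {C : ℝ≥0∞} (hC : C ≠ ⊤)
    (hGC : ∀ᵐ x ∂μ₁, ∫⁻ y, ENNReal.ofReal (‖G x y‖ ^ 2) ∂κ x ≤ C) :
    MemLp (fun p => G p.1 p.2 * g p.1) 2 (μ₁ ⊗ₘ κ) := by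
  have hGm : ∀ x, Measurable (G x) := fun x => hG.comp measurable_prodMk_left
  have hm : AEStronglyMeasurable (fun p : α × β => G p.1 p.2 * g p.1) (μ₁ ⊗ₘ κ) :=
    (hG.mul (hg.comp measurable_fst)).aestronglyMeasurable
  refine (memLp_two_iff_lintegral_ofReal_norm_sq_lt_top hm).2 ?_
  simp only [norm_mul, mul_pow, ENNReal.ofReal_mul (sq_nonneg _)]
  calc ∫⁻ p, ENNReal.ofReal (‖G p.1 p.2‖ ^ 2) * ENNReal.ofReal (‖g p.1‖ ^ 2) ∂(μ₁ ⊗ₘ κ)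
      = ∫⁻ x, (∫⁻ y, ENNReal.ofReal (‖G x y‖ ^ 2) ∂κ x) * ENNReal.ofReal (‖g x‖ ^ 2) ∂μ₁ := by
        have hsq : Measurable fun p : α × β =>
            ENNReal.ofReal (‖G p.1 p.2‖ ^ 2) * ENNReal.ofReal (‖g p.1‖ ^ 2) :=
          (hG.norm.pow_const 2).ennreal_ofReal.mul
            ((hg.comp measurable_fst).norm.pow_const 2).ennreal_ofReal
        rw [Measure.lintegral_compProd hsq]
        refine lintegral_congr fun x => ?_
        dsimp only
        exact lintegral_mul_const _ ((hGm x).norm.pow_const 2).ennreal_ofReal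
    _ ≤ ∫⁻ x, C * ENNReal.ofReal (‖g x‖ ^ 2) ∂μ₁ :=
        lintegral_mono_ae (by filter_upwards [hGC] with x hx using mul_le_mul_left hx _)
    _ < ⊤ := by
        rw [lintegral_const_mul _ (by fun_prop)]
        exact ENNReal.mul_lt_top hC.lt_top
          ((memLp_two_iff_lintegral_ofReal_norm_sq_lt_top hg.aestronglyMeasurable).1 hgL2)

lemma MeasureTheory.MemLp.ae_memLp_two_compProd_slice {f : α × β → ℂ} (hf : MemLp f 2 (μ₁ ⊗ₘ κ))
    (hfm : StronglyMeasurable f) : ∀ᵐ x ∂μ₁, MemLp (fun y => f (x, y)) 2 (κ x) := by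
  have hsq : Measurable fun p => ENNReal.ofReal (‖f p‖ ^ 2) := by fun_prop
  have hfin := (memLp_two_iff_lintegral_ofReal_norm_sq_lt_top hf.1).1 hf
  rw [Measure.lintegral_compProd hsq] at hfin
  filter_upwards [ae_lt_top (hsq.lintegral_kernel_prod_right') hfin.ne] with x hx
  exact (memLp_two_iff_lintegral_ofReal_norm_sq_lt_top
    (hfm.comp_measurable measurable_prodMk_left).aestronglyMeasurable).2 hx

lemma integral_compProd_mul_conj_mul {f : α × β → ℂ} {g : α → ℂ} {G : α → β → ℂ}
    (hf : MemLp f 2 (μ₁ ⊗ₘ κ)) (hGg : MemLp (fun p => G p.1 p.2 * g p.1) 2 (μ₁ ⊗ₘ κ)) :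
    ∫ p, f p * conj (G p.1 p.2 * g p.1) ∂(μ₁ ⊗ₘ κ)
      = ∫ x, (∫ y, f (x, y) * conj (G x y) ∂κ x) * conj (g x) ∂μ₁ := by
  have hint : Integrable (fun p => f p * conj (G p.1 p.2 * g p.1)) (μ₁ ⊗ₘ κ) :=
    hf.integrable_mul hGg.star
  rw [Measure.integral_compProd hint]
  refine integral_congr_ae (ae_of_all _ fun x => ?_)
  simp only [map_mul, ← integral_mul_const, mul_assoc]

end CompProd

theorem IsParsevalFrame.compProd {α β ι ι' : Type*} [MeasurableSpace α] [MeasurableSpace β]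
    [Countable ι'] {μ₁ : Measure α} [IsFiniteMeasure μ₁] {κ : Kernel α β} [IsFiniteKernel κ]
    {g : ι → α → ℂ} (hg : ∀ i, Measurable (g i)) (hgF : IsParsevalFrame μ₁ g)
    {G : ι' → α → β → ℂ} (hG : ∀ j, Measurable (Function.uncurry (G j)))
    (hGF : ∀ᵐ x ∂μ₁, IsParsevalFrame (κ x) fun j => G j x) :
    IsParsevalFrame (μ₁ ⊗ₘ κ) fun (q : ι × ι') p => G q.2 p.1 p.2 * g q.1 p.1 := by
  refine of_tsum_ofReal_eq_lintegral fun f hfm hf => ?_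
  set F : ι' → α → ℂ := fun j x => ∫ y, f (x, y) * conj (G j x y) ∂κ x
  have hsq : Measurable fun p => ENNReal.ofReal (‖f p‖ ^ 2) := by fun_prop
  have hslice := hf.ae_memLp_two_compProd_slice hfm
  have hFsum : ∀ᵐ x ∂μ₁, ∑' j, ENNReal.ofReal (‖F j x‖ ^ 2)
      = ∫⁻ y, ENNReal.ofReal (‖f (x, y)‖ ^ 2) ∂κ x := by
    filter_upwards [hGF, hslice] with x hx hfx using hx.tsum_ofReal_eq_lintegral hfx
  have hFm : ∀ j, StronglyMeasurable (F j) := fun j =>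
    (hfm.mul ((hG j).stronglyMeasurable.star)).integral_kernel_prod_right'
  have hF : ∀ j, MemLp (F j) 2 μ₁ := fun j => by
    refine (memLp_two_iff_lintegral_ofReal_norm_sq_lt_top (hFm j).aestronglyMeasurable).2 ?_
    calc ∫⁻ x, ENNReal.ofReal (‖F j x‖ ^ 2) ∂μ₁
        ≤ ∫⁻ x, ∫⁻ y, ENNReal.ofReal (‖f (x, y)‖ ^ 2) ∂κ x ∂μ₁ :=
          lintegral_mono_ae (by filter_upwards [hFsum] with x hx using hx ▸ ENNReal.le_tsum j)
      _ < ⊤ := by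
          rw [← Measure.lintegral_compProd hsq]
          exact (memLp_two_iff_lintegral_ofReal_norm_sq_lt_top hf.1).1 hf
  have hgL2 : ∀ i, MemLp (g i) 2 μ₁ := fun i =>
    (memLp_two_iff_lintegral_ofReal_norm_sq_lt_top (hg i).aestronglyMeasurable).2
      ((hgF.lintegral_ofReal_norm_sq_le_one (hg i)).trans_lt ENNReal.one_lt_top)
  have hGle : ∀ j, ∀ᵐ x ∂μ₁, ∫⁻ y, ENNReal.ofReal (‖G j x y‖ ^ 2) ∂κ x ≤ 1 := fun j => by
    filter_upwards [hGF] with x hx using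
      hx.lintegral_ofReal_norm_sq_le_one ((hG j).comp measurable_prodMk_left)
  have hcoeff : ∀ i j, ∫ p, f p * conj (G j p.1 p.2 * g i p.1) ∂(μ₁ ⊗ₘ κ)
      = ∫ x, F j x * conj (g i x) ∂μ₁ := fun i j =>
    integral_compProd_mul_conj_mul hf <|
      memLp_two_compProd_mul (hg i) (hgL2 i) (hG j) ENNReal.one_ne_top (hGle j)
  calc ∑' q : ι × ι', ENNReal.ofReal (‖∫ p, f p * conj (G q.2 p.1 p.2 * g q.1 p.1) ∂(μ₁ ⊗ₘ κ)‖ ^ 2)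
      = ∑' j, ∑' i, ENNReal.ofReal (‖∫ x, F j x * conj (g i x) ∂μ₁‖ ^ 2) := by
        rw [ENNReal.tsum_prod', ENNReal.tsum_comm]
        simp only [hcoeff]
    _ = ∑' j, ∫⁻ x, ENNReal.ofReal (‖F j x‖ ^ 2) ∂μ₁ :=
        tsum_congr fun j => hgF.tsum_ofReal_eq_lintegral (hF j)
    _ = ∫⁻ x, ∑' j, ENNReal.ofReal (‖F j x‖ ^ 2) ∂μ₁ :=
        (lintegral_tsum fun j => (hF j).1.norm.pow 2 |>.aemeasurable.ennreal_ofReal).symm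
    _ = ∫⁻ p, ENNReal.ofReal (‖f p‖ ^ 2) ∂(μ₁ ⊗ₘ κ) := by
        rw [lintegral_congr_ae hFsum, Measure.lintegral_compProd hsq]

section Disintegration

variable {α : Type*} [MeasurableSpace α] {μ : Measure (α × ℝ)} [IsFiniteMeasure μ]
  {γ : α → Measure ℝ}

-- Shifting by `1` makes the left side positive, so the right side is not the junk value of a
-- non-integrable function: this is where measurability of `x ↦ γ x s` comes from.
lemma integrable_measureReal_of_forall_integral_eq [NeZero μ] [∀ x, IsProbabilityMeasure (γ x)]
    (hdis : ∀ f : α × ℝ → ℝ, Integrable f μ → ∫ p, f p ∂μ = ∫ x, ∫ y, f (x, y) ∂γ x ∂μ.fst)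
    {s : Set ℝ} (hs : MeasurableSet s) : Integrable (fun x => (γ x).real s) μ.fst := by
  set f : α × ℝ → ℝ := fun p => 1 + s.indicator 1 p.2
  have hf : Integrable f μ :=
    (integrable_const 1).add ((integrable_const 1).indicator (measurable_snd hs))
  have hslice : ∀ x, ∫ y, f (x, y) ∂γ x = 1 + (γ x).real s := fun x => by
    rw [integral_add (integrable_const 1) ((integrable_const 1).indicator hs),
      integral_indicator_one hs]
    simp
  have hpos : 0 < ∫ p, f p ∂μ := by
    refine (measureReal_univ_pos (μ := μ)).trans_le ?_
    rw [← integral_indicator_one MeasurableSet.univ]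
    refine integral_mono (integrable_const 1 |>.indicator MeasurableSet.univ) hf fun p => ?_
    simp [f, indicator_nonneg]
  have hsum : Integrable (fun x => 1 + (γ x).real s) μ.fst := by
    by_contra hni
    have h := hdis f hf
    simp_rw [hslice, integral_undef hni] at h
    exact hpos.ne' h
  exact (hsum.sub (integrable_const 1)).congr (ae_of_all _ fun x => by simp)

lemma setIntegral_measureReal_of_forall_integral_eq
    (hdis : ∀ f : α × ℝ → ℝ, Integrable f μ → ∫ p, f p ∂μ = ∫ x, ∫ y, f (x, y) ∂γ x ∂μ.fst)
    {A : Set α} (hA : MeasurableSet A) {s : Set ℝ} (hs : MeasurableSet s) :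
    ∫ x in A, (γ x).real s ∂μ.fst = μ.real (A ×ˢ s) := by
  have h := hdis ((A ×ˢ s).indicator 1) ((integrable_const 1).indicator (hA.prod hs))
  rw [integral_indicator_one (hA.prod hs)] at h
  rw [h, ← integral_indicator hA]
  refine integral_congr_ae (ae_of_all _ fun x => ?_)
  by_cases hx : x ∈ A <;> simp [indicator_prod_one, hx, integral_indicator_one hs]

theorem ae_eq_condKernel_of_forall_integral_eq [∀ x, IsProbabilityMeasure (γ x)]
    (hdis : ∀ f : α × ℝ → ℂ, Integrable f μ → ∫ p, f p ∂μ = ∫ x, ∫ y, f (x, y) ∂γ x ∂μ.fst) :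
    ∀ᵐ x ∂μ.fst, γ x = μ.condKernel x := by
  rcases eq_zero_or_neZero μ with rfl | _
  · simp
  have hdisℝ : ∀ f : α × ℝ → ℝ, Integrable f μ →
      ∫ p, f p ∂μ = ∫ x, ∫ y, f (x, y) ∂γ x ∂μ.fst := fun f hf => by
    have h := hdis (fun p => f p) hf.ofReal
    simp_rw [integral_complex_ofReal] at h
    exact_mod_cast h
  have hreal : ∀ s, MeasurableSet s →
      ∀ᵐ x ∂μ.fst, (γ x).real s = (μ.condKernel x).real s := fun s hs => by
    have hκ : Integrable (fun x => (μ.condKernel x).real s) μ.fst :=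
      .of_bound (Kernel.measurable_coe _ hs).ennreal_toReal.aestronglyMeasurable 1
        (ae_of_all _ fun x => by
          rw [Real.norm_eq_abs, abs_of_nonneg measureReal_nonneg]
          exact measureReal_le_one)
    refine ae_eq_of_forall_setIntegral_eq_of_sigmaFinite
      (fun _ _ _ => (integrable_measureReal_of_forall_integral_eq hdisℝ hs).integrableOn)
      (fun _ _ _ => hκ.integrableOn) fun A hA _ => ?_
    rw [setIntegral_measureReal_of_forall_integral_eq hdisℝ hA hs]
    have h := Measure.setIntegral_condKernel (ρ := μ) (f := fun _ => (1 : ℝ)) hA hs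
      (integrableOn_const (measure_ne_top _ _))
    simp only [setIntegral_const, smul_eq_mul, mul_one] at h
    exact h.symm
  filter_upwards [ae_all_iff.2 fun q : ℚ => hreal _ (measurableSet_Iic (a := (q : ℝ)))] with x hx
  refine ext_of_generate_finite _ Real.borel_eq_generateFrom_Iic_rat Real.isPiSystem_Iic_rat
    ?_ (by simp)
  simp only [mem_iUnion, mem_singleton_iff]
  rintro _ ⟨q, rfl⟩
  exact (measureReal_eq_measureReal_iff).1 (hx q)

end Disintegration

theorem stmt5_general (μ : Measure (ℝ × ℝ)) [IsProbabilityMeasure μ]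
    (μ₁ : Measure ℝ) (hμ₁ : μ₁ = μ.map Prod.fst)
    (γ : ℝ → Measure ℝ) (hprob : ∀ x₁, IsProbabilityMeasure (γ x₁))
    (hdis : ∀ f : ℝ × ℝ → ℂ, Integrable f μ →
      ∫ p, f p ∂μ = ∫ x₁, ∫ x₂, f (x₁, x₂) ∂(γ x₁) ∂μ₁)
    (g : ℕ → ℝ → ℂ) (hgmeas : ∀ n₁, Measurable (g n₁))
    (hPF1 : ∀ f : ℝ → ℂ, MemLp f 2 μ₁ →
      ∑' n₁ : ℕ, ‖∫ x₁, f x₁ * (starRingEnd ℂ) (g n₁ x₁) ∂μ₁‖ ^ 2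
        = ∫ x₁, ‖f x₁‖ ^ 2 ∂μ₁)
    (G : ℕ → ℝ → ℝ → ℂ) (hGmeas : ∀ n₂, Measurable (Function.uncurry (G n₂)))
    (hPF2 : ∀ᵐ x₁ ∂μ₁, ∀ f : ℝ → ℂ, MemLp f 2 (γ x₁) →
      ∑' n₂ : ℕ, ‖∫ x₂, f x₂ * (starRingEnd ℂ) (G n₂ x₁ x₂) ∂(γ x₁)‖ ^ 2
        = ∫ x₂, ‖f x₂‖ ^ 2 ∂(γ x₁)) :
    ∀ f : ℝ × ℝ → ℂ, MemLp f 2 μ →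
      ∑' q : ℕ × ℕ,
        ‖∫ p, f p * (starRingEnd ℂ) (G q.2 p.1 p.2 * g q.1 p.1) ∂μ‖ ^ 2
          = ∫ p, ‖f p‖ ^ 2 ∂μ := by
  have hfst : μ₁ = μ.fst := hμ₁
  subst hfst
  have hκ : ∀ᵐ x ∂μ.fst, IsParsevalFrame (μ.condKernel x) fun n => G n x := by
    filter_upwards [hPF2, ae_eq_condKernel_of_forall_integral_eq hdis] with x hx hγ
    exact hγ ▸ hx
  have h := IsParsevalFrame.compProd hgmeas hPF1 hGmeas hκ
  rwa [μ.disintegrate μ.condKernel] at h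

/-- If `{g_{n₁}}` is a Parseval frame for `L²(μ₁)` and for `μ₁`-a.e. `x₁`
the family `{G_{n₂}^{x₁}}` is a Parseval frame for `L²(γ^{x₁})` (jointly measurable),
then `{(x₁,x₂) ↦ G_{n₂}^{x₁}(x₂) g_{n₁}(x₁)}` is a Parseval frame for `L²(μ)`,
where `μ` disintegrates as marginal `μ₁` with slices `γ^{x₁}`. -/
theorem stmt5 (μ : Measure (ℝ × ℝ)) [IsProbabilityMeasure μ]
    (μ₁ : Measure ℝ) (hμ₁ : μ₁ = μ.map Prod.fst)
    (γ : ℝ → Measure ℝ) (hprob : ∀ x₁, IsProbabilityMeasure (γ x₁))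
    (hdis : ∀ f : ℝ × ℝ → ℂ, Integrable f μ →
      ∫ p, f p ∂μ = ∫ x₁, ∫ x₂, f (x₁, x₂) ∂(γ x₁) ∂μ₁)
    (g : ℕ → ℝ → ℂ) (hgmeas : ∀ n₁, Measurable (g n₁))
    (hgL2 : ∀ n₁, MemLp (g n₁) 2 μ₁)
    (hPF1 : ∀ f : ℝ → ℂ, MemLp f 2 μ₁ →
      ∑' n₁ : ℕ, ‖∫ x₁, f x₁ * (starRingEnd ℂ) (g n₁ x₁) ∂μ₁‖ ^ 2
        = ∫ x₁, ‖f x₁‖ ^ 2 ∂μ₁)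
    (G : ℕ → ℝ → ℝ → ℂ) (hGmeas : ∀ n₂, Measurable (Function.uncurry (G n₂)))
    (hPF2 : ∀ᵐ x₁ ∂μ₁, ∀ f : ℝ → ℂ, MemLp f 2 (γ x₁) →
      ∑' n₂ : ℕ, ‖∫ x₂, f x₂ * (starRingEnd ℂ) (G n₂ x₁ x₂) ∂(γ x₁)‖ ^ 2
        = ∫ x₂, ‖f x₂‖ ^ 2 ∂(γ x₁)) :
    ∀ f : ℝ × ℝ → ℂ, MemLp f 2 μ →
      ∑' q : ℕ × ℕ,
        ‖∫ p, f p * (starRingEnd ℂ) (G q.2 p.1 p.2 * g q.1 p.1) ∂μ‖ ^ 2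
          = ∫ p, ‖f p‖ ^ 2 ∂μ :=
  stmt5_general μ μ₁ hμ₁ γ hprob hdis g hgmeas hPF1 G hGmeas hPF2
end

section
/- Consider the iterated function system on [0,1) consisting of the maps λ₀(x) = x/3, λ₁(x) = (x+1)/3, λ₂(x) = (x+2)/3 with weights 8/20, 4/20, 8/20 respectively. Its Hutchinson invariant measure is singular with respect to Lebesgue measure on [0,1). -/
/-!
In the triadic cylinder with leading digits `d₀, …, d₍ₙ₋₁₎`, the invariant measure `μ` puts mass
`∏ p(dᵢ)` with `p = (8/20, 4/20, 8/20)`, and Lebesgue measure puts mass `3⁻ⁿ`. So the digit `1`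
has frequency `1/5` for `μ` and `1/3` for Lebesgue measure. Chernoff bounds show that the union
of the cylinders of length `n` with at most `n/4` ones has exponentially small Lebesgue measure,
and its complement has exponentially small `μ`-measure. By Borel–Cantelli, `μ`-almost every
point lies in these sets for all large `n`, while Lebesgue-almost every point lies in only
finitely many of them.
-/

open MeasureTheory BoundedContinuousFunction Set
open scoped ENNReal NNReal

namespace BAdicIFS

variable {b : ℕ}

noncomputable def digitMap (b : ℕ) (j : Fin b) (x : ℝ) : ℝ := (x + j) / b

/-- The points of `[0, 1)` whose base-`b` expansion starts with the digits `d 0, d 1, …`. -/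
def cylinder : {n : ℕ} → (Fin n → Fin b) → Set ℝ
  | 0, _ => Ico 0 1
  | _ + 1, d => digitMap b (d 0) '' cylinder (Fin.tail d)

def IsHutchinsonInvariant (p : Fin b → ℝ≥0) (μ : Measure ℝ) : Prop :=
  μ = ∑ j, p j • μ.map (digitMap b j)

variable [NeZero b]

lemma digitMap_injective (j : Fin b) : Function.Injective (digitMap b j) := by
  intro x y h
  have hb : (b : ℝ) ≠ 0 := Nat.cast_ne_zero.mpr (NeZero.ne b)
  simpa [digitMap, div_left_inj' hb] using h

lemma measurableEmbedding_digitMap (j : Fin b) : MeasurableEmbedding (digitMap b j) :=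
  Continuous.measurableEmbedding (by unfold digitMap; fun_prop) (digitMap_injective j)

lemma digitMap_mem_Ico {x : ℝ} (hx : x ∈ Ico (0 : ℝ) 1) (j : Fin b) :
    digitMap b j x ∈ Ico (0 : ℝ) 1 := by
  have hb : (0 : ℝ) < b := Nat.cast_pos.mpr (Nat.pos_of_neZero b)
  have hj : (j : ℝ) + 1 ≤ b := by exact_mod_cast j.isLt
  obtain ⟨hx0, hx1⟩ := hx
  constructor
  · unfold digitMap; positivity
  · rw [digitMap, div_lt_one hb]; linarith

lemma disjoint_preimage_digitMap_image {A : Set ℝ} (hA : A ⊆ Ico 0 1) {i j : Fin b}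
    (hij : i ≠ j) : Disjoint (digitMap b i ⁻¹' (digitMap b j '' A)) (Ico 0 1) := by
  rw [Set.disjoint_left]
  rintro x ⟨y, hy, hyx⟩ ⟨hx0, hx1⟩
  have hb : (b : ℝ) ≠ 0 := Nat.cast_ne_zero.mpr (NeZero.ne b)
  have hxy : x + i = y + j := by simpa [digitMap, div_left_inj' hb] using hyx.symm
  obtain ⟨hy0, hy1⟩ := hA hy
  have hij_lt : (i : ℤ) < j + 1 := by exact_mod_cast (by linarith : (i : ℝ) < j + 1)
  have hji_lt : (j : ℤ) < i + 1 := by exact_mod_cast (by linarith : (j : ℝ) < i + 1)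
  exact hij (Fin.ext (by omega))

lemma iUnion_digitMap_image_Ico : ⋃ j : Fin b, digitMap b j '' Ico 0 1 = Ico (0 : ℝ) 1 := by
  refine subset_antisymm (iUnion_subset fun j => ?_) fun x ⟨hx0, hx1⟩ => ?_
  · rintro _ ⟨x, hx, rfl⟩; exact digitMap_mem_Ico hx j
  have hb : (0 : ℝ) < b := Nat.cast_pos.mpr (Nat.pos_of_neZero b)
  have hbx : 0 ≤ b * x := by positivity
  have hlt : ⌊b * x⌋₊ < b := by rw [Nat.floor_lt hbx]; nlinarith
  refine mem_iUnion.mpr ⟨⟨⌊b * x⌋₊, hlt⟩, b * x - ⌊b * x⌋₊, ⟨?_, ?_⟩, ?_⟩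
  · linarith [Nat.floor_le hbx]
  · linarith [Nat.lt_floor_add_one (b * x)]
  · simp only [digitMap]; field_simp; ring

lemma volume_digitMap_image (j : Fin b) (A : Set ℝ) :
    volume (digitMap b j '' A) = (b : ℝ≥0∞)⁻¹ * volume A := by
  have hb : (b : ℝ) ≠ 0 := Nat.cast_ne_zero.mpr (NeZero.ne b)
  have himage : digitMap b j '' A
      = (fun x => (b : ℝ) * x) ⁻¹' ((fun x => x + -(j : ℝ)) ⁻¹' A) := by
    ext x
    simp only [mem_image, mem_preimage, digitMap]
    constructor
    · rintro ⟨y, hy, rfl⟩; convert hy using 1; field_simp; ring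
    · intro hx; exact ⟨_, hx, by field_simp; ring⟩
  rw [himage, Real.volume_preimage_mul_left hb, measure_preimage_add_right, abs_inv,
    Nat.abs_cast, ENNReal.ofReal_inv_of_pos (by positivity), ENNReal.ofReal_natCast]

lemma cylinder_subset_Ico : ∀ {n : ℕ} (d : Fin n → Fin b), cylinder d ⊆ Ico 0 1
  | 0, _ => subset_rfl
  | _ + 1, d => by
    rintro _ ⟨x, hx, rfl⟩
    exact digitMap_mem_Ico (cylinder_subset_Ico _ hx) _

lemma iUnion_cylinder : ∀ n : ℕ, ⋃ d : Fin n → Fin b, cylinder d = Ico 0 1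
  | 0 => iUnion_const _
  | n + 1 =>
    calc ⋃ d : Fin (n + 1) → Fin b, cylinder d
        = ⋃ j : Fin b, digitMap b j '' ⋃ e : Fin n → Fin b, cylinder e := by
          simp_rw [image_iUnion]
          ext x
          simp only [mem_iUnion]
          constructor
          · rintro ⟨d, hd⟩; exact ⟨d 0, Fin.tail d, hd⟩
          · rintro ⟨j, e, he⟩; exact ⟨Fin.cons j e, he⟩
      _ = Ico 0 1 := by rw [iUnion_cylinder n, iUnion_digitMap_image_Ico]

lemma measure_cylinder {ν : Measure ℝ} {p : Fin b → ℝ≥0∞} (h01 : ν (Ico 0 1) = 1)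
    (h : ∀ j A, A ⊆ Ico 0 1 → ν (digitMap b j '' A) = p j * ν A) :
    ∀ {n : ℕ} (d : Fin n → Fin b), ν (cylinder d) = ∏ i, p (d i)
  | 0, _ => by simpa [cylinder] using h01
  | _ + 1, d => by
    rw [cylinder, h _ _ (cylinder_subset_Ico _), measure_cylinder h01 h, Fin.prod_univ_succ]
    rfl

lemma volume_cylinder {n : ℕ} (d : Fin n → Fin b) :
    volume (cylinder d) = (b : ℝ≥0∞)⁻¹ ^ n := by
  rw [measure_cylinder (p := fun _ => (b : ℝ≥0∞)⁻¹) (by simp)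
    (fun j A _ => volume_digitMap_image j A)]
  simp

lemma measure_compl_biUnion_cylinder_le {μ : Measure ℝ} (hsupp : μ (Ico 0 1)ᶜ = 0) {n : ℕ}
    (S : Finset (Fin n → Fin b)) :
    μ (⋃ d ∈ S, cylinder d)ᶜ ≤ ∑ d ∈ Sᶜ, μ (cylinder d) := by
  have hcover : (⋃ d ∈ S, cylinder d)ᶜ ⊆ (⋃ d ∈ Sᶜ, cylinder d) ∪ (Ico 0 1)ᶜ := by
    intro x hx
    by_cases hx01 : x ∈ Ico (0 : ℝ) 1
    · rw [← iUnion_cylinder (b := b) n, mem_iUnion] at hx01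
      obtain ⟨d, hd⟩ := hx01
      have hdS : d ∉ S := fun hdS => hx (mem_biUnion hdS hd)
      exact Or.inl (mem_biUnion (Finset.mem_compl.mpr hdS) hd)
    · exact Or.inr hx01
  calc μ (⋃ d ∈ S, cylinder d)ᶜ ≤ μ (⋃ d ∈ Sᶜ, cylinder d) + μ (Ico 0 1)ᶜ :=
        (measure_mono hcover).trans (measure_union_le _ _)
    _ ≤ ∑ d ∈ Sᶜ, μ (cylinder d) := by
        rw [hsupp, add_zero]; exact measure_biUnion_finset_le _ _

lemma isHutchinsonInvariant_of_integral {p : Fin b → ℝ≥0} {μ : Measure ℝ} [IsFiniteMeasure μ]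
    (h : ∀ f : ℝ →ᵇ ℝ, ∫ x, f x ∂μ = ∑ j, (p j : ℝ) * ∫ x, f (digitMap b j x) ∂μ) :
    IsHutchinsonInvariant p μ := by
  refine ext_of_forall_integral_eq_of_IsFiniteMeasure fun f => ?_
  rw [h f, integral_finsetSum_measure fun j _ => f.integrable _]
  refine Finset.sum_congr rfl fun j _ => ?_
  rw [integral_smul_nnreal_measure, (measurableEmbedding_digitMap j).integral_map,
    NNReal.smul_def, smul_eq_mul]

namespace IsHutchinsonInvariant

variable {p : Fin b → ℝ≥0} {μ : Measure ℝ}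

/-- The other maps send `digitMap b j '' A` outside `[0, 1)`, where `μ` has no mass. -/
lemma measure_digitMap_image (hμ : IsHutchinsonInvariant p μ) (hsupp : μ (Ico 0 1)ᶜ = 0)
    (j : Fin b) {A : Set ℝ} (hA : A ⊆ Ico 0 1) : μ (digitMap b j '' A) = p j * μ A := by
  conv_lhs => rw [hμ]
  rw [Measure.coe_finsetSum, Finset.sum_apply, Finset.sum_eq_single j]
  · rw [Measure.coe_nnreal_smul_apply, (measurableEmbedding_digitMap j).map_apply,
      (digitMap_injective j).preimage_image]
  · intro i _ hij
    rw [Measure.coe_nnreal_smul_apply, (measurableEmbedding_digitMap i).map_apply,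
      measure_mono_null (disjoint_preimage_digitMap_image hA hij).subset_compl_right hsupp,
      mul_zero]
  · simp

lemma measure_cylinder [IsProbabilityMeasure μ] (hμ : IsHutchinsonInvariant p μ)
    (hsupp : μ (Ico 0 1)ᶜ = 0) {n : ℕ} (d : Fin n → Fin b) :
    μ (cylinder d) = ∏ i, (p (d i) : ℝ≥0∞) :=
  BAdicIFS.measure_cylinder ((prob_compl_eq_zero_iff measurableSet_Ico).mp hsupp)
    (fun j _ hA => hμ.measure_digitMap_image hsupp j hA) d

end IsHutchinsonInvariant

end BAdicIFS

section LargeDeviations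

open Finset

variable {α : Type*}

lemma sum_prod_le_pow_of_one_le_prod [Fintype α] {n : ℕ} (p g : α → ℝ≥0)
    (S : Finset (Fin n → α)) (hS : ∀ d ∈ S, 1 ≤ ∏ i, g (d i)) :
    ∑ d ∈ S, ∏ i, p (d i) ≤ (∑ a, p a * g a) ^ n :=
  calc ∑ d ∈ S, ∏ i, p (d i)
      ≤ ∑ d ∈ S, ∏ i, p (d i) * g (d i) := sum_le_sum fun d hd => by
        rw [prod_mul_distrib]; exact le_mul_of_one_le_right' (hS d hd)
    _ ≤ ∑ d : Fin n → α, ∏ i, p (d i) * g (d i) := sum_le_sum_of_subset (subset_univ S)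
    _ = (∑ a, p a * g a) ^ n := (Fintype.sum_pow (fun a => p a * g a) n).symm

variable [DecidableEq α]

def digitCount (j : α) {n : ℕ} (d : Fin n → α) : ℕ := #{i | d i = j}

lemma prod_mul_pow_ite_eq (c t : ℝ≥0) (j : α) {n : ℕ} (d : Fin n → α) :
    ∏ i, c * t ^ (if d i = j then 1 else 0) = c ^ n * t ^ digitCount j d := by
  rw [prod_mul_distrib, prod_const, card_univ, Fintype.card_fin, prod_pow_eq_pow_sum, sum_boole,
    Nat.cast_id, digitCount]

end LargeDeviations

lemma one_le_inv_pow_mul_pow {K : Type*} [Semifield K] [LinearOrder K] [IsStrictOrderedRing K]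
    {a : K} (ha : 1 ≤ a) {m k : ℕ} (hmk : m ≤ k) : 1 ≤ a⁻¹ ^ m * a ^ k := by
  have hpos : 0 < a ^ m := pow_pos (zero_lt_one.trans_le ha) m
  rw [inv_pow, inv_mul_eq_div, one_le_div hpos]
  exact pow_le_pow_right₀ ha hmk

lemma ENNReal.tsum_ne_top_of_le_geometric {f : ℕ → ℝ≥0∞} {r : ℝ≥0} (hr : r < 1)
    (hf : ∀ n, f n ≤ (r : ℝ≥0∞) ^ n) : ∑' n, f n ≠ ∞ :=
  ne_top_of_le_ne_top
    (by
      rw [ENNReal.tsum_geometric, ENNReal.inv_ne_top]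
      exact (tsub_pos_of_lt (ENNReal.coe_lt_one_iff.mpr hr)).ne')
    (ENNReal.tsum_le_tsum hf)

lemma MeasureTheory.Measure.mutuallySingular_of_tsum_ne_top {Ω : Type*} [MeasurableSpace Ω]
    {μ ν : Measure Ω} {A : ℕ → Set Ω} (hμ : ∑' n, μ (A n)ᶜ ≠ ∞) (hν : ∑' n, ν (A n) ≠ ∞) :
    μ ⟂ₘ ν := by
  refine Measure.MutuallySingular.mk (s := {x | ∀ᶠ n in Filter.atTop, x ∈ A n}ᶜ)
    (t := {x | ∀ᶠ n in Filter.atTop, x ∈ A n}) ?_ ?_ (by simp)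
  · have h := ae_eventually_notMem hμ
    simp only [mem_compl_iff, not_not] at h
    exact h
  · refine measure_mono_null (fun x hx => ?_) (ae_iff.mp (ae_eventually_notMem hν))
    exact fun hx' => (hx.and hx').exists.elim fun _ h => h.2 h.1

namespace Triadic

open BAdicIFS

noncomputable def weights : Fin 3 → ℝ≥0 := ![8 / 20, 4 / 20, 8 / 20]

def fewOnesWords (n : ℕ) : Finset (Fin n → Fin 3) := {d | 4 * digitCount 1 d ≤ n}

def fewOnes (n : ℕ) : Set ℝ := ⋃ d ∈ fewOnesWords n, cylinder d

/- Chernoff tilt `(11/10)^(4 · #ones - n)` (its inverse for Lebesgue measure below): it is `≥ 1`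
on one side of the ones-frequency `1/4`, which separates `weights 1 = 1/5` from `1/3`. -/
lemma sum_prod_weights_compl_fewOnesWords_le (n : ℕ) :
    ∑ d ∈ (fewOnesWords n)ᶜ, ∏ i, weights (d i) ≤ (54641 / 55000) ^ n :=
  calc _ ≤ (∑ a, weights a * ((11 / 10)⁻¹ * ((11 / 10) ^ 4) ^ (if a = 1 then 1 else 0))) ^ n :=
        sum_prod_le_pow_of_one_le_prod _ _ _ fun d hd => by
          rw [prod_mul_pow_ite_eq, ← pow_mul]
          refine one_le_inv_pow_mul_pow (by rw [← NNReal.coe_le_coe]; norm_num) ?_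
          simp only [fewOnesWords, Finset.compl_filter, Finset.mem_filter] at hd
          omega
    _ = _ := by
        congr 1
        rw [← NNReal.coe_inj]
        simp [Fin.sum_univ_three, weights]
        norm_num

lemma sum_fewOnesWords_inv_three_pow_le (n : ℕ) :
    ∑ _d ∈ fewOnesWords n, (3⁻¹ : ℝ≥0) ^ n ≤ (72017 / 73205) ^ n := by
  have hchernoff := sum_prod_le_pow_of_one_le_prod (fun _ : Fin 3 => (3⁻¹ : ℝ≥0))
    (fun a => 11 / 10 * ((11 / 10) ^ 4)⁻¹ ^ (if a = 1 then 1 else 0)) (fewOnesWords n)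
    fun d hd => by
      rw [prod_mul_pow_ite_eq, ← inv_pow, ← pow_mul, mul_comm]
      refine one_le_inv_pow_mul_pow (by rw [← NNReal.coe_le_coe]; norm_num) ?_
      simp only [fewOnesWords, Finset.mem_filter] at hd
      omega
  simp only [Finset.prod_const, Finset.card_univ, Fintype.card_fin] at hchernoff
  refine hchernoff.trans_eq (congrArg (· ^ n) ?_)
  rw [← NNReal.coe_inj]
  simp [Fin.sum_univ_three]
  norm_num

lemma measure_compl_fewOnes_le {μ : Measure ℝ} [IsProbabilityMeasure μ]
    (hμ : IsHutchinsonInvariant weights μ) (hsupp : μ (Ico 0 1)ᶜ = 0) (n : ℕ) :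
    μ (fewOnes n)ᶜ ≤ ((54641 / 55000 : ℝ≥0) : ℝ≥0∞) ^ n :=
  calc μ (fewOnes n)ᶜ ≤ ∑ d ∈ (fewOnesWords n)ᶜ, μ (cylinder d) :=
        measure_compl_biUnion_cylinder_le hsupp _
    _ = ↑(∑ d ∈ (fewOnesWords n)ᶜ, ∏ i, weights (d i)) := by
        simp only [hμ.measure_cylinder hsupp, ENNReal.ofNNReal_finsetSum,
          ENNReal.ofNNReal_finsetProd]
    _ ≤ _ := by
        rw [← ENNReal.coe_pow]; exact_mod_cast sum_prod_weights_compl_fewOnesWords_le n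

lemma volume_fewOnes_le (n : ℕ) : volume (fewOnes n) ≤ ((72017 / 73205 : ℝ≥0) : ℝ≥0∞) ^ n :=
  calc volume (fewOnes n) ≤ ∑ d ∈ fewOnesWords n, volume (cylinder d) :=
        measure_biUnion_finset_le _ _
    _ = ↑(∑ _d ∈ fewOnesWords n, (3⁻¹ : ℝ≥0) ^ n) := by
        rw [ENNReal.ofNNReal_finsetSum]
        refine Finset.sum_congr rfl fun d _ => ?_
        rw [volume_cylinder, ENNReal.coe_pow, ENNReal.coe_inv three_ne_zero]
        rfl
    _ ≤ _ := by rw [← ENNReal.coe_pow]; exact_mod_cast sum_fewOnesWords_inv_three_pow_le n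

end Triadic

/-- The Hutchinson invariant measure of the IFS on `[0,1)` given by
`λ₀(x)=x/3`, `λ₁(x)=(x+1)/3`, `λ₂(x)=(x+2)/3` with weights `8/20, 4/20, 8/20`
is singular with respect to Lebesgue measure. -/
theorem stmt13 (μ : Measure ℝ) [IsProbabilityMeasure μ]
    (hsupp : μ (Set.Ico (0 : ℝ) 1)ᶜ = 0)
    (hinv : ∀ f : ℝ →ᵇ ℝ,
      ∫ x, f x ∂μ
        = (8 / 20) * ∫ x, f (x / 3) ∂μ + (4 / 20) * ∫ x, f ((x + 1) / 3) ∂μ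
            + (8 / 20) * ∫ x, f ((x + 2) / 3) ∂μ) :
    μ ⟂ₘ (volume : Measure ℝ) := by
  have hμ : BAdicIFS.IsHutchinsonInvariant Triadic.weights μ :=
    BAdicIFS.isHutchinsonInvariant_of_integral fun f => by
      rw [hinv f]
      simp [Fin.sum_univ_three, BAdicIFS.digitMap, Triadic.weights]
  exact Measure.mutuallySingular_of_tsum_ne_top (A := Triadic.fewOnes)
    (ENNReal.tsum_ne_top_of_le_geometric (by rw [← NNReal.coe_lt_coe]; norm_num)
      (Triadic.measure_compl_fewOnes_le hμ hsupp))
    (ENNReal.tsum_ne_top_of_le_geometric (by rw [← NNReal.coe_lt_coe]; norm_num)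
      Triadic.volume_fewOnes_le)
end

section
/- Let U be a unitary operator on a Hilbert space H and C a closed subspace of H. For each w in the open unit disk there exists a unique bounded operator B(w) on C such that ⟨(1+wU*)(1−wU*)^{-1} a, c⟩ = ⟨(I+B(w))(I−B(w))^{-1} a, c⟩ for all a, c ∈ C; moreover ‖B(w)‖ ≤ |w|, so I − B(w) is invertible. -/
/-!
With `A = w U*` we have `‖A‖ ≤ |w| < 1`, and the Cayley transform `T = (1 + A)(1 - A)⁻¹`
satisfies `‖T x - x‖ ≤ |w| ‖T x + x‖`, because `T x - x = 2 A y` and `T x + x = 2 y` for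
`y = (1 - A)⁻¹ x`. Squared, this inequality only involves `‖T x‖`, `‖x‖` and `Re ⟪T x, x⟫`, and
survives the compression `S = P_C T|_C`, which keeps the inner product and lowers `‖T x‖`. It makes
`S` accretive, so `S + 1` is invertible and `B = 1 - 2 (S + 1)⁻¹` is the unique operator whose
Cayley transform is `S`; reading the inequality at `x = (S + 1) y`, where `B x = S y - y`,
gives `‖B‖ ≤ |w|`.
-/

open RCLike
open scoped InnerProductSpace

section Cayley

variable {R : Type*} [Ring R]

noncomputable def cayley (b : R) : R := (1 + b) * Ring.inverse (1 - b)

noncomputable def cayleyInv (s : R) : R := 1 - 2 * Ring.inverse (s + 1)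

lemma cayley_add_one {b : R} (hb : IsUnit (1 - b)) :
    cayley b + 1 = 2 * Ring.inverse (1 - b) := by
  calc cayley b + 1 = (1 + b) * Ring.inverse (1 - b) + (1 - b) * Ring.inverse (1 - b) := by
        rw [cayley, Ring.mul_inverse_cancel _ hb]
    _ = 2 * Ring.inverse (1 - b) := by rw [← add_mul, add_add_sub_cancel, one_add_one_eq_two]

lemma cayley_sub_one {b : R} (hb : IsUnit (1 - b)) :
    cayley b - 1 = 2 * b * Ring.inverse (1 - b) := by
  calc cayley b - 1 = (1 + b) * Ring.inverse (1 - b) - (1 - b) * Ring.inverse (1 - b) := by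
        rw [cayley, Ring.mul_inverse_cancel _ hb]
    _ = 2 * b * Ring.inverse (1 - b) := by rw [← sub_mul]; noncomm_ring

lemma cayley_injOn (h2 : IsUnit (2 : R)) : Set.InjOn cayley {b : R | IsUnit (1 - b)} := by
  intro a ha b hb hab
  have hinv : Ring.inverse (1 - a) = Ring.inverse (1 - b) :=
    h2.mul_left_cancel (by rw [← cayley_add_one ha, ← cayley_add_one hb, hab])
  have : 1 - a = 1 - b := by rw [← Ring.inverse_inverse ha, hinv, Ring.inverse_inverse hb]
  exact sub_right_injective this

lemma one_sub_cayleyInv (s : R) : 1 - cayleyInv s = 2 * Ring.inverse (s + 1) :=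
  sub_sub_cancel _ _

lemma isUnit_one_sub_cayleyInv {s : R} (h2 : IsUnit (2 : R)) (hs : IsUnit (s + 1)) :
    IsUnit (1 - cayleyInv s) := by
  rw [one_sub_cayleyInv]
  exact h2.mul hs.ringInverse

lemma cayley_cayleyInv {s : R} (h2 : IsUnit (2 : R)) (hs : IsUnit (s + 1)) :
    cayley (cayleyInv s) = s := by
  have h := cayley_add_one (isUnit_one_sub_cayleyInv h2 hs)
  rw [one_sub_cayleyInv, Ring.inverse_mul (.inr hs.ringInverse), Ring.inverse_inverse hs,
    ← mul_assoc, (Commute.ofNat_left 2 (s + 1)).eq, mul_assoc, Ring.mul_inverse_cancel _ h2,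
    mul_one] at h
  exact add_right_cancel h

lemma cayleyInv_mul_add_one {s : R} (hs : IsUnit (s + 1)) :
    cayleyInv s * (s + 1) = s - 1 := by
  rw [cayleyInv, sub_mul, mul_assoc, Ring.inverse_mul_cancel _ hs]
  noncomm_ring

end Cayley

section NormedSpace

variable {𝕜 E : Type*} [NontriviallyNormedField 𝕜] [NormedAddCommGroup E] [NormedSpace 𝕜 E]

lemma norm_cayley_apply_sub_le {A : E →L[𝕜] E} {r : ℝ} (hA1 : IsUnit (1 - A)) (hA : ‖A‖ ≤ r)
    (x : E) : ‖cayley A x - x‖ ≤ r * ‖cayley A x + x‖ := by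
  set y := Ring.inverse (1 - A) x
  have hsub : cayley A x - x = (2 : 𝕜) • A y := by
    change (cayley A - 1) x = _
    simp [cayley_sub_one hA1, y, two_smul]
  have hadd : cayley A x + x = (2 : 𝕜) • y := by
    change (cayley A + 1) x = _
    simp [cayley_add_one hA1, y, two_smul]
  rw [hsub, hadd, norm_smul, norm_smul, mul_left_comm]
  exact mul_le_mul_of_nonneg_left (A.le_of_opNorm_le hA y) (norm_nonneg _)

lemma norm_cayleyInv_le {S : E →L[𝕜] E} {r : ℝ} (hr : 0 ≤ r) (hS1 : IsUnit (S + 1))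
    (hS : ∀ x, ‖S x - x‖ ≤ r * ‖S x + x‖) : ‖cayleyInv S‖ ≤ r := by
  refine ContinuousLinearMap.opNorm_le_bound _ hr fun x ↦ ?_
  obtain ⟨y, rfl⟩ : ∃ y, (S + 1) y = x := ⟨Ring.inverse (S + 1) x, by
    rw [← mul_apply_eq_comp, Ring.mul_inverse_cancel _ hS1, one_apply_eq_self]⟩
  rw [← mul_apply_eq_comp, cayleyInv_mul_add_one hS1]
  simpa using hS y

end NormedSpace

section InnerProductSpace

variable {𝕜 E : Type*} [RCLike 𝕜] [NormedAddCommGroup E] [InnerProductSpace 𝕜 E]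

lemma re_inner_nonneg_of_norm_sub_le_norm_add {u v : E} (h : ‖u - v‖ ≤ ‖u + v‖) :
    0 ≤ re ⟪u, v⟫_𝕜 := by
  have := pow_le_pow_left₀ (norm_nonneg _) h 2
  rw [@norm_sub_sq 𝕜, @norm_add_sq 𝕜] at this
  linarith

lemma norm_sub_le_mul_norm_add_of_norm_le {r : ℝ} (hr0 : 0 ≤ r) (hr1 : r ≤ 1) {u u' v : E}
    (h : ‖u - v‖ ≤ r * ‖u + v‖) (hu : ‖u'‖ ≤ ‖u‖) (hre : re ⟪u', v⟫_𝕜 = re ⟪u, v⟫_𝕜) :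
    ‖u' - v‖ ≤ r * ‖u' + v‖ := by
  have hsq := pow_le_pow_left₀ (norm_nonneg _) h 2
  have hu2 := pow_le_pow_left₀ (norm_nonneg _) hu 2
  have hr2 : r ^ 2 ≤ 1 := pow_le_one₀ hr0 hr1
  refine (pow_le_pow_iff_left₀ (norm_nonneg _) (by positivity) two_ne_zero).mp ?_
  rw [mul_pow, @norm_sub_sq 𝕜, @norm_add_sq 𝕜] at hsq ⊢
  rw [hre]
  nlinarith [mul_le_mul_of_nonneg_left hu2 (sub_nonneg.2 hr2)]

lemma isUnit_add_one_of_norm_sub_le_norm_add [CompleteSpace E] {S : E →L[𝕜] E}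
    (hS : ∀ x, ‖S x - x‖ ≤ ‖S x + x‖) : IsUnit (S + 1) := by
  refine ContinuousLinearMap.isUnit_of_forall_le_norm_inner_map _ one_pos fun x ↦ ?_
  calc ‖x‖ ^ 2 * (1 : NNReal) ≤ re ⟪S x, x⟫_𝕜 + re ⟪x, x⟫_𝕜 := by
        simpa [inner_self_eq_norm_sq] using re_inner_nonneg_of_norm_sub_le_norm_add (hS x)
    _ = re ⟪(S + 1) x, x⟫_𝕜 := by simp [inner_add_left]
    _ ≤ ‖⟪(S + 1) x, x⟫_𝕜‖ := re_le_norm _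

lemma norm_adjoint_le_one_of_comp_adjoint_eq_one [CompleteSpace E] {U : E →L[𝕜] E}
    (hU : U ∘L U.adjoint = 1) : ‖U.adjoint‖ ≤ 1 := by
  have hiso : ∀ x, ‖U.adjoint x‖ = ‖x‖ := by
    rwa [ContinuousLinearMap.norm_map_iff_adjoint_comp_self, ContinuousLinearMap.adjoint_adjoint]
  exact ContinuousLinearMap.opNorm_le_bound _ zero_le_one fun x ↦ by rw [hiso, one_mul]

variable (K : Submodule 𝕜 E) [K.HasOrthogonalProjection]

noncomputable def compress (T : E →L[𝕜] E) : K →L[𝕜] K :=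
  K.orthogonalProjectionOnto ∘L T ∘L K.subtypeL

lemma inner_compress_apply (T : E →L[𝕜] E) (a c : K) : ⟪compress K T a, c⟫_𝕜 = ⟪T a, c⟫_𝕜 :=
  K.inner_orthogonalProjectionOnto_eq_of_mem_right c (T a)

lemma compress_eq_iff {T : E →L[𝕜] E} {X : K →L[𝕜] K} :
    compress K T = X ↔ ∀ a c : K, ⟪T a, c⟫_𝕜 = ⟪X a, c⟫_𝕜 := by
  refine ⟨fun h a c ↦ h ▸ (inner_compress_apply K T a c).symm, fun h ↦ ?_⟩
  ext1 a
  exact ext_inner_right 𝕜 fun c ↦ (inner_compress_apply K T a c).trans (h a c)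

lemma norm_compress_apply_sub_le {T : E →L[𝕜] E} {r : ℝ} (hr0 : 0 ≤ r) (hr1 : r ≤ 1)
    (hT : ∀ x, ‖T x - x‖ ≤ r * ‖T x + x‖) (a : K) :
    ‖compress K T a - a‖ ≤ r * ‖compress K T a + a‖ := by
  have hre : re ⟪(compress K T a : E), a⟫_𝕜 = re ⟪T a, a⟫_𝕜 :=
    congrArg re (inner_compress_apply K T a a)
  exact_mod_cast norm_sub_le_mul_norm_add_of_norm_le hr0 hr1 (hT a)
    (K.norm_orthogonalProjectionOnto_apply_le (T a)) hre

end InnerProductSpace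

theorem stmt19_general {H : Type*} [NormedAddCommGroup H] [InnerProductSpace ℂ H]
    [CompleteSpace H]
    (U : H →L[ℂ] H)
    (hU₁ : U ∘L ContinuousLinearMap.adjoint U = 1)
    (K : Submodule ℂ H) (hK : IsClosed (K : Set H)) :
    ∀ w : ℂ, ‖w‖ < 1 →
      ∃! B : K →L[ℂ] K, ‖B‖ ≤ ‖w‖ ∧ ∀ a c : K,
        (inner ℂ
            (((1 + w • ContinuousLinearMap.adjoint U).comp
              (Ring.inverse (1 - w • ContinuousLinearMap.adjoint U))) (a : H))
            (c : H) : ℂ)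
          = (inner ℂ (((1 + B).comp (Ring.inverse (1 - B))) a) c : ℂ) := by
  intro w hw
  have : CompleteSpace K := hK.completeSpace_coe
  set A := w • U.adjoint
  have hA : ‖A‖ ≤ ‖w‖ := (norm_smul_le _ _).trans
    (mul_le_of_le_one_right (norm_nonneg w) (norm_adjoint_le_one_of_comp_adjoint_eq_one hU₁))
  set S := compress K (cayley A)
  have hS : ∀ a, ‖S a - a‖ ≤ ‖w‖ * ‖S a + a‖ :=
    norm_compress_apply_sub_le K (norm_nonneg w) hw.le
      (norm_cayley_apply_sub_le (isUnit_one_sub_of_norm_lt_one (hA.trans_lt hw)) hA)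
  have hS1 : IsUnit (S + 1) := isUnit_add_one_of_norm_sub_le_norm_add fun a ↦
    (hS a).trans (mul_le_of_le_one_left (norm_nonneg _) hw.le)
  have h2 : IsUnit (2 : K →L[ℂ] K) := by
    have := (isUnit_of_invertible (2 : ℂ)).map (algebraMap ℂ (K →L[ℂ] K))
    rwa [map_ofNat] at this
  have hunit : ∀ B : K →L[ℂ] K, ‖B‖ ≤ ‖w‖ → IsUnit (1 - B) := fun B hB ↦
    isUnit_one_sub_of_norm_lt_one (R := K →L[ℂ] K) (hB.trans_lt hw)
  have hcond : ∀ B : K →L[ℂ] K, (∀ a c : K, ⟪cayley A a, (c : H)⟫_ℂ = ⟪cayley B a, c⟫_ℂ) ↔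
      cayley B = S := fun B ↦ (compress_eq_iff K).symm.trans eq_comm
  have hnorm := norm_cayleyInv_le (norm_nonneg w) hS1 hS
  have hcayley := cayley_cayleyInv h2 hS1
  refine ⟨cayleyInv S, ⟨hnorm, (hcond _).2 hcayley⟩, fun B ⟨hB, hBS⟩ ↦ ?_⟩
  exact cayley_injOn h2 (hunit B hB) (hunit _ hnorm) (((hcond B).1 hBS).trans hcayley.symm)

/-- de Branges' Lemma 2: For a unitary `U` on a Hilbert space `H` and a
closed subspace `C = K`, for each `w` in the open unit disk there is a unique bounded
operator `B(w)` on `K` with `‖B(w)‖ ≤ |w|` (so `I − B(w)` is invertible) such that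
`⟨(1+wU*)(1−wU*)⁻¹ a, c⟩ = ⟨(I+B(w))(I−B(w))⁻¹ a, c⟩` for all `a, c ∈ K`. -/
theorem stmt19 {H : Type*} [NormedAddCommGroup H] [InnerProductSpace ℂ H]
    [CompleteSpace H]
    (U : H →L[ℂ] H)
    (hU₁ : U ∘L ContinuousLinearMap.adjoint U = 1)
    (hU₂ : ContinuousLinearMap.adjoint U ∘L U = 1)
    (K : Submodule ℂ H) (hK : IsClosed (K : Set H)) :
    ∀ w : ℂ, ‖w‖ < 1 →
      ∃! B : K →L[ℂ] K, ‖B‖ ≤ ‖w‖ ∧ ∀ a c : K,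
        (inner ℂ
            (((1 + w • ContinuousLinearMap.adjoint U).comp
              (Ring.inverse (1 - w • ContinuousLinearMap.adjoint U))) (a : H))
            (c : H) : ℂ)
          = (inner ℂ (((1 + B).comp (Ring.inverse (1 - B))) a) c : ℂ) :=
  stmt19_general U hU₁ K hK
end
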